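/- arXiv:2507.12579 — 5 statements merged into one kernel-verified Lean document; each statement's English description precedes it below -/
import Mathlib

section
/- If a graph H contains two distinct vertices u, w with identical closed neighborhoods N_H[u] = N_H[w], then V(H) \ {u, w} is a failed zero forcing set of H, and hence FZ(H) ≥ |V(H)| − 2. -/
variable {V : Type*}

/-- Zero forcing closure: vertices eventually forced starting from `S`. -/
inductive ZFClos (G : SimpleGraph V) (S : Set V) : V → Prop
  | mem (v : V) : v ∈ S → ZFClos G S v
  | force (u v : V) : ZFClos G S u → G.Adj u v →
      (∀ w, G.Adj u w → w ≠ v → ZFClos G S w) → ZFClos G S v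

/-- `S` is a zero forcing set of `G`. -/
def IsZFSet (G : SimpleGraph V) (S : Set V) : Prop := ∀ v, ZFClos G S v

/-- `S` is a failed zero forcing set of `G`. -/
def IsFailedZFSet (G : SimpleGraph V) (S : Set V) : Prop := ¬ IsZFSet G S

/-- The zero forcing number `Z(G)`. -/
noncomputable def zfNumber (G : SimpleGraph V) [Fintype V] : ℕ :=
  sInf {n | ∃ S : Finset V, S.card = n ∧ IsZFSet G ↑S}

/-- The failed zero forcing number `FZ(G)`. -/
noncomputable def fzNumber (G : SimpleGraph V) [Fintype V] : ℕ :=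
  sSup {n | ∃ S : Finset V, S.card = n ∧ IsFailedZFSet G ↑S}

/-- Loop zero forcing closure. -/
inductive LZFClos (G : SimpleGraph V) (S : Set V) : V → Prop
  | mem (v : V) : v ∈ S → LZFClos G S v
  | force (u v : V) : LZFClos G S u → G.Adj u v →
      (∀ w, G.Adj u w → w ≠ v → LZFClos G S w) → LZFClos G S v
  | loop (v : V) : (∀ w, G.Adj v w → LZFClos G S w) → LZFClos G S v

/-- One ILT step: simultaneously clone every vertex.  The clone of `b` is `Sum.inr b`,
adjacent to the closed neighborhood of `b`; clones form an independent set. -/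
def iltStep (G : SimpleGraph V) : SimpleGraph (V ⊕ V) where
  Adj x y :=
    match x, y with
    | Sum.inl a, Sum.inl b => G.Adj a b
    | Sum.inl a, Sum.inr b => a = b ∨ G.Adj a b
    | Sum.inr a, Sum.inl b => b = a ∨ G.Adj b a
    | Sum.inr _, Sum.inr _ => False
  symm := by
    constructor
    rintro (a | a) (b | b) h
    · exact G.adj_symm h
    · exact h
    · exact h
    · exact h.elim
  loopless := by
    constructor
    rintro (a | a) h
    · exact G.irrefl h
    · exact h

/-- One ILAT step: simultaneously anticlone every vertex.  The anticlone of `b` is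
`Sum.inr b`, adjacent to the complement of the closed neighborhood of `b`. -/
def ilatStep (G : SimpleGraph V) : SimpleGraph (V ⊕ V) where
  Adj x y :=
    match x, y with
    | Sum.inl a, Sum.inl b => G.Adj a b
    | Sum.inl a, Sum.inr b => a ≠ b ∧ ¬ G.Adj a b
    | Sum.inr a, Sum.inl b => b ≠ a ∧ ¬ G.Adj b a
    | Sum.inr _, Sum.inr _ => False
  symm := by
    constructor
    rintro (a | a) (b | b) h
    · exact G.adj_symm h
    · exact h
    · exact h
    · exact h.elim
  loopless := by
    constructor
    rintro (a | a) h
    · exact G.irrefl h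
    · exact h

/-- One IIM step: each vertex `b` is cloned if `c b = true` and anticloned otherwise. -/
def iimStep (G : SimpleGraph V) (c : V → Bool) : SimpleGraph (V ⊕ V) where
  Adj x y :=
    match x, y with
    | Sum.inl a, Sum.inl b => G.Adj a b
    | Sum.inl a, Sum.inr b => if c b then a = b ∨ G.Adj a b else a ≠ b ∧ ¬ G.Adj a b
    | Sum.inr a, Sum.inl b => if c a then b = a ∨ G.Adj b a else b ≠ a ∧ ¬ G.Adj b a
    | Sum.inr _, Sum.inr _ => False
  symm := by
    constructor
    rintro (a | a) (b | b) h
    · exact G.adj_symm h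
    · exact h
    · exact h
    · exact h.elim
  loopless := by
    constructor
    rintro (a | a) h
    · exact G.irrefl h
    · exact h

/-- Adding a single clone of the vertex `v` (the new vertex is `none`). -/
def cloneOne (G : SimpleGraph V) (v : V) : SimpleGraph (Option V) where
  Adj x y :=
    match x, y with
    | some a, some b => G.Adj a b
    | some a, none => a = v ∨ G.Adj a v
    | none, some b => b = v ∨ G.Adj b v
    | none, none => False
  symm := by
    constructor
    rintro (_ | a) (_ | b) h
    · exact h.elim
    · exact h
    · exact h
    · exact G.adj_symm h
  loopless := by
    constructor
    rintro (_ | a) h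
    · exact h
    · exact G.irrefl h

/-- The vertex type after `l` doubling steps. -/
def IterV (V : Type*) : ℕ → Type _
  | 0 => V
  | l + 1 => IterV V l ⊕ IterV V l

instance iterVFintype [Fintype V] : ∀ l, Fintype (IterV V l)
  | 0 => ‹Fintype V›
  | l + 1 =>
    haveI : Fintype (IterV V l) := iterVFintype l
    inferInstanceAs (Fintype (IterV V l ⊕ IterV V l))

/-- `ILT_l(G)`. -/
def iltIter (G : SimpleGraph V) : ∀ l, SimpleGraph (IterV V l)
  | 0 => G
  | l + 1 => iltStep (iltIter G l)

/-- `ILAT_l(G)`. -/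
def ilatIter (G : SimpleGraph V) : ∀ l, SimpleGraph (IterV V l)
  | 0 => G
  | l + 1 => ilatStep (ilatIter G l)

/-- Iterated Independent Model: at step `n+1`, vertex `b` of the current graph is cloned
if `c n b = true` and anticloned otherwise. -/
def iimIter (G : SimpleGraph V) (c : ∀ n, IterV V n → Bool) : ∀ l, SimpleGraph (IterV V l)
  | 0 => G
  | l + 1 => iimStep (iimIter G c l) (c l)

/-- The level (time step of creation) of a vertex; level 0 is the base graph. -/
def iterLevel : ∀ {l}, IterV V l → ℕ
  | 0, _ => 0
  | _ + 1, Sum.inl x => iterLevel x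
  | l + 1, Sum.inr _ => l + 1

/-- The unique ancestor in the base graph of a vertex of an iterated graph. -/
def iterProj : ∀ {l}, IterV V l → V
  | 0, v => v
  | _ + 1, Sum.inl x => iterProj x
  | _ + 1, Sum.inr x => iterProj x

/-- The copy of a base vertex `v` (level 0) inside `IterV V l`. -/
def iterInj0 : ∀ l, V → IterV V l
  | 0, v => v
  | l + 1, v => Sum.inl (iterInj0 l v)

/-- The level-1 clone/anticlone of a base vertex `v`, viewed inside `IterV V (l+1)`. -/
def iterInj1 : ∀ l, V → IterV V (l + 1)
  | 0, v => Sum.inr v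
  | l + 1, v => Sum.inl (iterInj1 l v)

/-- The set of burned vertices after `t` burning steps, with sources `s 0, s 1, …`:
at each step the fire spreads to all neighbors of burned vertices and a new source burns. -/
def burnSet (G : SimpleGraph V) (s : ℕ → V) : ℕ → Set V
  | 0 => ∅
  | t + 1 => insert (s t) (burnSet G s t ∪ {v | ∃ u ∈ burnSet G s t, G.Adj u v})

/-- `G` can be fully burned in `k` steps. -/
def BurnsIn (G : SimpleGraph V) (k : ℕ) : Prop :=
  ∃ s : ℕ → V, burnSet G s k = Set.univ

/-- `G` can be fully burned in `k` steps with the final source superfluous: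
the fire spread alone covers everything at step `k`. -/
def BurnsInStar (G : SimpleGraph V) (k : ℕ) : Prop :=
  ∃ s : ℕ → V,
    (burnSet G s (k - 1) ∪ {v | ∃ u ∈ burnSet G s (k - 1), G.Adj u v}) = Set.univ

/-- The burning number `b(G)`. -/
noncomputable def burningNumber (G : SimpleGraph V) : ℕ := sInf {k | BurnsIn G k}

/-- The burning number `b*(G)` with superfluous final source. -/
noncomputable def burningNumberStar (G : SimpleGraph V) : ℕ := sInf {k | BurnsInStar G k}

/-! A fort is a set `F` such that no vertex outside `F` has exactly one neighbor in `F`.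
Forcing can never enter a fort, since the first forced vertex of `F` would have been the
unique unforced neighbor in `F` of its forcing vertex. Two distinct twins `u`, `w` form a
fort: a vertex outside `{u, w}` adjacent to one of them is adjacent to both. -/

def IsFort (G : SimpleGraph V) (F : Set V) : Prop :=
  ∀ x ∉ F, ∀ v ∈ F, G.Adj x v → ∃ v' ∈ F, v' ≠ v ∧ G.Adj x v'

theorem ZFClos.notMem_of_isFort {G : SimpleGraph V} {S F : Set V} (hF : IsFort G F)
    (hSF : Disjoint S F) {v : V} (hv : ZFClos G S v) : v ∉ F := by
  induction hv with
  | mem v hvS => exact hSF.notMem_of_mem_left hvS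
  | force x v _ hxv _ hxF hrestF =>
    intro hvF
    obtain ⟨v', hv'F, hv'v, hxv'⟩ := hF x hxF v hvF hxv
    exact hrestF v' hxv' hv'v hv'F

theorem isFailedZFSet_of_isFort {G : SimpleGraph V} {S F : Set V} (hF : IsFort G F)
    (hFne : F.Nonempty) (hSF : Disjoint S F) : IsFailedZFSet G S := fun hS =>
  let ⟨v, hvF⟩ := hFne
  (hS v).notMem_of_isFort hF hSF hvF

theorem SimpleGraph.adj_of_insert_neighborSet_eq {G : SimpleGraph V} {u w x : V}
    (h : insert u (G.neighborSet u) = insert w (G.neighborSet w)) (hxw : x ≠ w)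
    (hxu : G.Adj x u) : G.Adj x w := by
  have hx : x ∈ insert w (G.neighborSet w) := h ▸ Set.mem_insert_of_mem u hxu.symm
  exact (hx.resolve_left hxw).symm

theorem isFort_pair_of_insert_neighborSet_eq {G : SimpleGraph V} {u w : V} (hne : u ≠ w)
    (h : insert u (G.neighborSet u) = insert w (G.neighborSet w)) : IsFort G {u, w} := by
  rintro x hx v (rfl | rfl) hxv
  · have hxw : x ≠ w := fun hxw => hx (Or.inr hxw)
    exact ⟨w, Or.inr rfl, hne.symm, G.adj_of_insert_neighborSet_eq h hxw hxv⟩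
  · have hxu : x ≠ u := fun hxu => hx (Or.inl hxu)
    exact ⟨u, Or.inl rfl, hne, G.adj_of_insert_neighborSet_eq h.symm hxu hxv⟩

theorem card_le_fzNumber [Fintype V] {G : SimpleGraph V} {S : Finset V}
    (hS : IsFailedZFSet G ↑S) : S.card ≤ fzNumber G :=
  le_csSup ⟨Fintype.card V, fun _ ⟨T, hT, _⟩ => hT ▸ T.card_le_univ⟩ ⟨S, rfl, hS⟩

/-- two distinct vertices with identical closed neighborhoods give a
failed zero forcing set of size `|V(H)| - 2`, so `FZ(H) ≥ |V(H)| - 2`. -/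
theorem stmt9 [Fintype V] (H : SimpleGraph V) (u w : V) (hne : u ≠ w)
    (h : insert u (H.neighborSet u) = insert w (H.neighborSet w)) :
    IsFailedZFSet H (Set.univ \ {u, w}) ∧ Fintype.card V - 2 ≤ fzNumber H := by
  classical
  have hfail : IsFailedZFSet H (Set.univ \ {u, w}) :=
    isFailedZFSet_of_isFort (isFort_pair_of_insert_neighborSet_eq hne h)
      (Set.insert_nonempty u {w}) Set.disjoint_sdiff_left
  have hcompl : ((({u, w} : Finset V)ᶜ : Finset V) : Set V) = Set.univ \ {u, w} := by
    rw [Finset.coe_compl, Finset.coe_pair, Set.compl_eq_univ_sdiff]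
  refine ⟨hfail, ?_⟩
  calc Fintype.card V - 2 = (({u, w} : Finset V)ᶜ).card := by
        rw [Finset.card_compl, Finset.card_pair hne]
    _ ≤ fzNumber H := card_le_fzNumber (hcompl ▸ hfail)
end

section
/- Let G be any graph, U a zero forcing set of G, l ≥ 0, and H = ILT_l(G). Let W consist of U together with all descendants (iterated clones) of vertices of U in H. Then W is a zero forcing set of H. Consequently Z(ILT_l(G)) ≤ 2^l · Z(G). -/
variable {V : Type*}

/-! The clone `Sum.inr u` is adjacent exactly to `u` and the original neighbours of `u`, so whenever
`u` forces `v` in `G`, both `u` and its clone are ready to force in `ILT(G)`: the clone forces `v`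
(its neighbour `u` is already forced), after which `u` forces the clone of `v`. Starting from
`S` together with the clones of `S`, the forcing chains of `G` are thus replayed on both copies,
and iterating gives the bound `Z(ILT_l(G)) ≤ 2^l Z(G)`. -/

section ZeroForcing

variable {G : SimpleGraph V}

theorem ZFClos.iltStep {S : Set V} {v : V} (h : ZFClos G S v) :
    ZFClos (_root_.iltStep G) (Sum.elim id id ⁻¹' S) (Sum.inl v) ∧
      ZFClos (_root_.iltStep G) (Sum.elim id id ⁻¹' S) (Sum.inr v) := by
  induction h with
  | mem v hv => exact ⟨.mem _ hv, .mem _ hv⟩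
  | force u v _ hadj _ ihu ihw =>
    have hinl : ZFClos (_root_.iltStep G) (Sum.elim id id ⁻¹' S) (Sum.inl v) := by
      refine .force (Sum.inr u) (Sum.inl v) ihu.2 (Or.inr hadj.symm) ?_
      rintro (w | w) huw hwv
      · rcases huw with rfl | huw
        · exact ihu.1
        · exact (ihw w huw.symm (by rintro rfl; exact hwv rfl)).1
      · exact huw.elim
    refine ⟨hinl, .force (Sum.inl u) (Sum.inr v) ihu.1 (Or.inr hadj) ?_⟩
    rintro (w | w) huw hwv
    · rcases eq_or_ne w v with rfl | hwv'
      · exact hinl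
      · exact (ihw w huw hwv').1
    · rcases huw with rfl | huw
      · exact ihu.2
      · exact (ihw w huw (by rintro rfl; exact hwv rfl)).2

theorem IsZFSet.iltStep {S : Set V} (h : IsZFSet G S) :
    IsZFSet (_root_.iltStep G) (Sum.elim id id ⁻¹' S) := by
  rintro (v | v)
  exacts [(h v).iltStep.1, (h v).iltStep.2]

theorem IsZFSet.iltIter {U : Set V} (h : IsZFSet G U) :
    ∀ l, IsZFSet (_root_.iltIter G l) {x : IterV V l | iterProj x ∈ U}
  | 0 => h
  | l + 1 => by
    have hdesc : {x : IterV V (l + 1) | iterProj x ∈ U} =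
        Sum.elim id id ⁻¹' {x : IterV V l | iterProj x ∈ U} := by
      ext (x | x) <;> rfl
    rw [hdesc]
    exact (h.iltIter l).iltStep

variable (G) in
theorem exists_isZFSet_card_eq_zfNumber [Fintype V] :
    ∃ S : Finset V, S.card = zfNumber G ∧ IsZFSet G S :=
  Nat.sInf_mem (s := {n | ∃ S : Finset V, S.card = n ∧ IsZFSet G S})
    ⟨_, Finset.univ, rfl, fun v => .mem v (Finset.mem_univ v)⟩

theorem zfNumber_le_card [Fintype V] {S : Finset V} (h : IsZFSet G S) : zfNumber G ≤ S.card :=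
  Nat.sInf_le ⟨S, rfl, h⟩

end ZeroForcing

theorem card_iterProj_mem [Fintype V] (S : Finset V) :
    ∀ l, Nat.card {x : IterV V l // iterProj x ∈ S} = 2 ^ l * S.card
  | 0 => by simp [IterV, iterProj]
  | l + 1 => by
    have : Finite (IterV V l) := Finite.of_fintype _
    have e : {x : IterV V (l + 1) // iterProj x ∈ S} ≃
        {x : IterV V l // iterProj x ∈ S} ⊕ {x : IterV V l // iterProj x ∈ S} :=
      Equiv.subtypeSum
    rw [Nat.card_congr e, Nat.card_sum, card_iterProj_mem S l, pow_succ]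
    ring

/-- a zero forcing set of `G` together with all of its descendants is a
zero forcing set of `ILT_l(G)`; hence `Z(ILT_l(G)) ≤ 2^l · Z(G)`. -/
theorem stmt11 [Fintype V] (G : SimpleGraph V) (l : ℕ) (U : Set V) (hU : IsZFSet G U) :
    IsZFSet (iltIter G l) {x : IterV V l | iterProj x ∈ U} ∧
    zfNumber (iltIter G l) ≤ 2 ^ l * zfNumber G := by
  classical
  refine ⟨hU.iltIter l, ?_⟩
  obtain ⟨S, hS, hSzf⟩ := exists_isZFSet_card_eq_zfNumber G
  let W : Finset (IterV V l) := Finset.univ.filter fun x => iterProj x ∈ S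
  have hW : (W : Set (IterV V l)) = {x | iterProj x ∈ (S : Set V)} := by
    simp only [W, Finset.coe_filter, Finset.mem_univ, true_and, Finset.mem_coe]
  calc zfNumber (iltIter G l) ≤ W.card := zfNumber_le_card (hW ▸ hSzf.iltIter l)
    _ = 2 ^ l * zfNumber G := by
      rw [← hS, ← card_iterProj_mem S l, Nat.card_eq_fintype_card, Fintype.card_subtype]
end

section
/- In H = ILAT_l(G) with l ≥ 1, every vertex v lying in a level 0 ≤ i ≤ l−1 has degree exactly |V(H)|/2 − 1 in H. -/
variable {V : Type*}

/-! Each `b ≠ a` contributes exactly one neighbour to an old vertex `a` of an ILAT step: `b`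
itself if `a ~ b`, and its anticlone otherwise. Hence old vertices have degree `|V(H)| - 1`, which is
half the new order minus one, and every vertex of level at most `l` is old in the last step. -/

section IlatStep

variable {W : Type*}

theorem ilatStep_neighborSet_inl (H : SimpleGraph W) [DecidableRel H.Adj] (a : W) :
    (ilatStep H).neighborSet (Sum.inl a) =
      (fun b => if H.Adj a b then Sum.inl b else Sum.inr b) '' {a}ᶜ := by
  ext (b | b)
  · simpa [ilatStep, apply_ite (· = Sum.inl b), eq_comm (a := b)] using fun h : H.Adj a b => h.ne
  · simp [ilatStep, apply_ite (· = Sum.inr b), eq_comm (a := b)]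

theorem ncard_neighborSet_ilatStep_inl [Finite W] (H : SimpleGraph W) (a : W) :
    ((ilatStep H).neighborSet (Sum.inl a)).ncard = Nat.card W - 1 := by
  classical
  have hinj : Function.Injective
      (fun b => if H.Adj a b then (Sum.inl b : W ⊕ W) else Sum.inr b) := by
    intro b c hbc
    by_cases hb : H.Adj a b <;> by_cases hc : H.Adj a c <;> simp_all
  rw [ilatStep_neighborSet_inl, Set.ncard_image_of_injective _ hinj, Set.ncard_compl,
    Set.ncard_singleton]

end IlatStep

theorem card_iterV_succ [Fintype V] (l : ℕ) :
    Fintype.card (IterV V (l + 1)) = 2 * Fintype.card (IterV V l) :=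
  (Fintype.card_sum (α := IterV V l) (β := IterV V l)).trans (two_mul _).symm

/-- in `ILAT_l(G)` with `l ≥ 1`, every vertex of level at most `l - 1`
has degree exactly `|V|/2 - 1`. -/
theorem stmt14 [Fintype V] (G : SimpleGraph V) (l : ℕ) (v : IterV V (l + 1))
    (hv : iterLevel v ≤ l) :
    ((ilatIter G (l + 1)).neighborSet v).ncard =
      Fintype.card (IterV V (l + 1)) / 2 - 1 := by
  obtain a | a := v
  · rw [card_iterV_succ, Nat.mul_div_cancel_left _ two_pos, ← Nat.card_eq_fintype_card]
    exact ncard_neighborSet_ilatStep_inl (ilatIter G l) a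
  · exact absurd hv (by simp [iterLevel])
end

section
/- Let G be any graph and let H be a connected graph obtained from G by an iterated independent model (IIM) process of length l in which at least one vertex added at the final step l is an anticlone. Then H can be burned in at most 4 steps, and moreover the final source is superfluous: b*(H) ≤ 4. In particular, choosing the anticloned vertex u as the first source and its anticlone u'_l as the second source burns all vertices of levels 0 through l−1 by step 3 and all of H by step 4. -/
variable {V : Type*}

section Burning

variable {W : Type*} {G : SimpleGraph W} {s : ℕ → W}

lemma source_mem_burnSet (t : ℕ) : s t ∈ burnSet G s (t + 1) :=
  Set.mem_insert _ _

lemma mem_burnSet_succ_of_mem {t : ℕ} {v : W} (hv : v ∈ burnSet G s t) :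
    v ∈ burnSet G s (t + 1) :=
  Set.mem_insert_of_mem _ (Or.inl hv)

lemma mem_burnSet_succ_of_adj {t : ℕ} {u v : W} (hu : u ∈ burnSet G s t) (huv : G.Adj u v) :
    v ∈ burnSet G s (t + 1) :=
  Set.mem_insert_of_mem _ (Or.inr ⟨u, hu, huv⟩)

lemma BurnsInStar.burnsIn {k : ℕ} (h : BurnsInStar G (k + 1)) : BurnsIn G (k + 1) := by
  obtain ⟨s, hs⟩ := h
  refine ⟨s, ?_⟩
  rw [Nat.add_sub_cancel] at hs
  rw [burnSet, hs, Set.insert_eq_of_mem (Set.mem_univ _)]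

end Burning

section IIMStep

variable {G : SimpleGraph V} {c : V → Bool}

lemma exists_adj_inl_inr_of_connected (hconn : (iimStep G c).Connected) (b : V) :
    ∃ a, (iimStep G c).Adj (Sum.inl a) (Sum.inr b) := by
  obtain ⟨p⟩ := hconn.preconnected (Sum.inr b) (Sum.inl b)
  have hadj := p.adj_snd (p.not_nil_of_ne Sum.inr_ne_inl)
  generalize p.snd = w at hadj
  rcases w with a | a
  · exact ⟨a, hadj.symm⟩
  · exact hadj.elim

lemma iimStep_adj_inr_inl_of_anticlone {u a : V} (hu : c u = false) (hne : a ≠ u)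
    (hadj : ¬ G.Adj u a) : (iimStep G c).Adj (Sum.inr u) (Sum.inl a) := by
  simp only [iimStep, hu]
  exact ⟨hne, fun h => hadj h.symm⟩

/-- Every non-neighbour of `u` is a neighbour of its anticlone, so the sources `u`, then the
anticlone, burn all old vertices by step 3; by connectivity each new vertex has an old
neighbour. -/
theorem iimStep_burnsInStar_four (hconn : (iimStep G c).Connected) {u : V} (hu : c u = false) :
    BurnsInStar (iimStep G c) 4 := by
  let s : ℕ → V ⊕ V := fun n => if n = 1 then Sum.inr u else Sum.inl u
  have hu₁ : Sum.inl u ∈ burnSet (iimStep G c) s 1 := source_mem_burnSet 0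
  have hu₂ : Sum.inr u ∈ burnSet (iimStep G c) s 2 := source_mem_burnSet 1
  have hold : ∀ a, Sum.inl a ∈ burnSet (iimStep G c) s 3 := by
    intro a
    by_cases hau : a = u
    · subst hau
      exact mem_burnSet_succ_of_mem (mem_burnSet_succ_of_mem hu₁)
    by_cases hadj : G.Adj u a
    · exact mem_burnSet_succ_of_mem (mem_burnSet_succ_of_adj hu₁ hadj)
    · exact mem_burnSet_succ_of_adj hu₂ (iimStep_adj_inr_inl_of_anticlone hu hau hadj)
  refine ⟨s, Set.eq_univ_of_forall ?_⟩
  rintro (a | b)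
  · exact Or.inl (hold a)
  · obtain ⟨a, ha⟩ := exists_adj_inl_inr_of_connected hconn b
    exact Or.inr ⟨Sum.inl a, hold a, ha⟩

end IIMStep

/-- a connected IIM graph whose final level contains an anticlone can be
burned in at most 4 steps, with superfluous final source: `b(H) ≤ 4` and `b*(H) ≤ 4`. -/
theorem stmt15 (G : SimpleGraph V) (c : ∀ n, IterV V n → Bool) (l : ℕ)
    (hconn : (iimIter G c (l + 1)).Connected)
    (hanti : ∃ u : IterV V l, c l u = false) :
    burningNumber (iimIter G c (l + 1)) ≤ 4 ∧
    burningNumberStar (iimIter G c (l + 1)) ≤ 4 := by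
  obtain ⟨u, hu⟩ := hanti
  have hstar : BurnsInStar (iimIter G c (l + 1)) 4 := iimStep_burnsInStar_four hconn hu
  exact ⟨Nat.sInf_le hstar.burnsIn, Nat.sInf_le hstar⟩
end

section
/- Let G be a graph, W a failed loop zero forcing set of G, and H = ILT_l(G). Then W together with all vertices of H in levels 1 through l is a failed zero forcing set of H. -/
variable {V : Type*}

/-! Let `f : G ↪g H` be an induced copy of `G` such that every vertex of `H` outside it sees
the copy in a closed neighbourhood `f(N[a])`. Then zero forcing in `H`, traced on the copy, is
loop zero forcing in `G`: a force `f a → f w` is the force `a → w`, and a vertex outside the copy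
can force `f w` only if `a = w`, when all of `N(w)` is already forced (the loop rule), or if
`a ∈ N(w)`, when `a` is one of its other, already forced, neighbours and forces `w` in `G`.
In `ILT_l(G)` the level-0 vertices form such a copy, a higher-level vertex `y` seeing
`N[iterProj y]`; so a vertex missed by loop zero forcing from `W` has a level-0 copy that is
never forced. -/

theorem ZFClos.lzfClos_of_embedding {U : Type*} {G : SimpleGraph V} {H : SimpleGraph U}
    {W : Set V} {S : Set U} (f : G ↪g H) (hS : ∀ v, f v ∈ S → v ∈ W)
    (hclosed : ∀ y ∉ Set.range f, ∃ a, ∀ c, H.Adj y (f c) ↔ a = c ∨ G.Adj a c)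
    {w : V} (h : ZFClos H S (f w)) : LZFClos G W w := by
  generalize hx : f w = x at h
  induction h generalizing w with
  | mem x hx' =>
    subst hx
    exact .mem w (hS w hx')
  | force u x _ hux _ ihu ihnbr =>
    subst hx
    have forced_nbr : ∀ c, H.Adj u (f c) → c ≠ w → LZFClos G W c := fun c hc hcw =>
      ihnbr (f c) hc (f.injective.ne hcw) rfl
    by_cases hu : u ∈ Set.range f
    · obtain ⟨a, rfl⟩ := hu
      have haw : G.Adj a w := f.map_adj_iff.mp hux
      exact .force a w (ihu rfl) haw fun c hc hcw => forced_nbr c (f.map_adj_iff.mpr hc) hcw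
    · obtain ⟨a, ha⟩ := hclosed u hu
      rcases (ha w).mp hux with rfl | haw
      · exact .loop a fun c hc => forced_nbr c ((ha c).mpr (.inr hc)) (G.ne_of_adj hc).symm
      · have hLa : LZFClos G W a := forced_nbr a ((ha a).mpr (.inl rfl)) (G.ne_of_adj haw)
        exact .force a w hLa haw fun c hc hcw => forced_nbr c ((ha c).mpr (.inr hc)) hcw

theorem iterInj0_eq_iff : ∀ {l : ℕ} {w : V} {z : IterV V l},
    iterInj0 l w = z ↔ iterLevel z = 0 ∧ iterProj z = w
  | 0, _, _ => by simp only [iterInj0, iterLevel, iterProj, true_and]; exact eq_comm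
  | _ + 1, _, Sum.inl _ => Sum.inl_injective.eq_iff.trans iterInj0_eq_iff
  | l + 1, _, Sum.inr _ => by simp [iterInj0, iterLevel]

theorem iterInj0_injective (l : ℕ) : Function.Injective (iterInj0 (V := V) l) :=
  fun _ _ h => (iterInj0_eq_iff.mp h).2.symm.trans (iterInj0_eq_iff.mp rfl).2

theorem iterLevel_iterInj0 (l : ℕ) (w : V) : iterLevel (iterInj0 l w) = 0 :=
  (iterInj0_eq_iff.mp rfl).1

theorem iterProj_iterInj0 (l : ℕ) (w : V) : iterProj (iterInj0 l w) = w :=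
  (iterInj0_eq_iff.mp rfl).2

theorem iltIter_adj_iterInj0_iff (G : SimpleGraph V) : ∀ (l : ℕ) (y : IterV V l) (w : V),
    (iltIter G l).Adj y (iterInj0 l w) ↔
      G.Adj (iterProj y) w ∨ (iterLevel y ≠ 0 ∧ iterProj y = w)
  | 0, _, _ => by simp [iltIter, iterInj0, iterLevel, iterProj]
  | l + 1, Sum.inl x, w => iltIter_adj_iterInj0_iff G l x w
  | l + 1, Sum.inr z, w => by
    change iterInj0 l w = z ∨ (iltIter G l).Adj (iterInj0 l w) z ↔ _
    rw [iterInj0_eq_iff, (iltIter G l).adj_comm, iltIter_adj_iterInj0_iff G l z w]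
    by_cases hz : iterLevel z = 0 <;> simp [hz, iterLevel, iterProj, or_comm]

def iltIterEmbedding (G : SimpleGraph V) (l : ℕ) : G ↪g iltIter G l where
  toFun := iterInj0 l
  inj' := iterInj0_injective l
  map_rel_iff' {a b} := by
    simp [iltIter_adj_iterInj0_iff, iterLevel_iterInj0, iterProj_iterInj0]

@[simp]
theorem iltIterEmbedding_apply (G : SimpleGraph V) (l : ℕ) (v : V) :
    iltIterEmbedding G l v = iterInj0 l v :=
  rfl

theorem exists_iltIter_adj_iltIterEmbedding_iff (G : SimpleGraph V) (l : ℕ) :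
    ∀ y ∉ Set.range (iltIterEmbedding G l),
      ∃ a, ∀ c, (iltIter G l).Adj y (iltIterEmbedding G l c) ↔ a = c ∨ G.Adj a c := by
  intro y hy
  have hlevel : iterLevel y ≠ 0 := fun h0 => hy ⟨iterProj y, iterInj0_eq_iff.mpr ⟨h0, rfl⟩⟩
  exact ⟨iterProj y, fun c => by simp [iltIter_adj_iterInj0_iff, hlevel, or_comm]⟩

/-- a failed loop zero forcing set of `G`, together with all vertices of
levels `1` through `l`, is a failed zero forcing set of `ILT_l(G)`. -/
theorem stmt19 (G : SimpleGraph V) (l : ℕ) (W : Set V)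
    (hW : ∃ v, ¬ LZFClos G W v) :
    IsFailedZFSet (iltIter G l)
      ((iterInj0 l '' W) ∪ {x : IterV V l | 1 ≤ iterLevel x}) := by
  obtain ⟨v, hv⟩ := hW
  intro hZF
  refine hv ((hZF (iterInj0 l v)).lzfClos_of_embedding (iltIterEmbedding G l) ?_ ?_)
  · rintro u (⟨u', hu', hu⟩ | hu)
    · rwa [← iterInj0_injective l hu]
    · simp [iterLevel_iterInj0] at hu
  · exact exists_iltIter_adj_iltIterEmbedding_iff G l
end
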